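/- arXiv:2412.04435 — 2 statements merged into one kernel-verified Lean document; each statement's English description precedes it below -/
import Mathlib

section
/- (Proposition 3.) Let N ≥ 3 be an integer, ρ ∈ (−1, 0), and η ∈ (−ρ, ∞) with E_N(η) = E_N(ρ) (equivalently T_N(ρ, η) = 0). Then for every k with 1 ≤ k ≤ N−2, T_{k+1}(ρ, η)/F_{N−k−1}(η) − T_k(ρ, η)/F_{N−k}(η) ≥ 0. -/
/-!
Pairing `x⁻¹ ^ (2i-1) + x⁻¹ ^ (2i) = (x + 1) (x²)⁻¹ ^ i` writes `T_m(ρ, η)` as the partial sum of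
`p i = (η + 1) u ^ i - (ρ + 1) v ^ i` with `u = η⁻²`, `v = ρ⁻²`, `0 < u < v`. Since `p i / v ^ i`
decreases, `p` is nonnegative up to some index and nonpositive after it, and `η v ≥ 1` makes the
negative tail grow at least by the factor `η⁻¹` per step. Clearing denominators, the claim becomes
`T_k η ^ n + p (k+1) F_n(η) ≥ 0` with `n = N - k`. If `p (k+1) ≥ 0` every term is nonnegative;
otherwise `T_N = 0` gives `T_k = -(p (k+1) + ⋯ + p (k+n))`, which the growth of the tail bounds
termwise.
-/

open Finset

noncomputable def Efun (k : ℕ) (x : ℝ) : ℝ := ∑ j ∈ Finset.Icc 1 (2 * k), x ^ (-(j : ℤ))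

noncomputable def Ffun (k : ℕ) (x : ℝ) : ℝ := ∑ j ∈ Finset.Icc 1 k, x ^ j

noncomputable def Tfun (k : ℕ) (ρ η : ℝ) : ℝ := Efun k η - Efun k ρ

lemma Efun_succ (k : ℕ) (x : ℝ) :
    Efun (k + 1) x = Efun k x + x⁻¹ ^ (2 * k + 1) + x⁻¹ ^ (2 * k + 2) := by
  simp only [Efun, zpow_neg, zpow_natCast, ← inv_pow]
  rw [show 2 * (k + 1) = 2 * k + 1 + 1 by ring, sum_Icc_succ_top (by omega),
    sum_Icc_succ_top (by omega)]

lemma Efun_eq_sum {x : ℝ} (hx : x ≠ 0) (k : ℕ) :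
    Efun k x = ∑ i ∈ Icc 1 k, (x + 1) * (x ^ 2)⁻¹ ^ i := by
  induction k with
  | zero => simp [Efun]
  | succ k ih =>
    have pair : x⁻¹ ^ (2 * k + 1) + x⁻¹ ^ (2 * k + 2) = (x + 1) * (x ^ 2)⁻¹ ^ (k + 1) := by
      rw [← inv_pow x 2, ← pow_mul, show 2 * (k + 1) = 2 * k + 1 + 1 by ring,
        pow_succ _ (2 * k + 1)]
      field_simp
    rw [Efun_succ, ih, sum_Icc_succ_top (by omega), add_assoc, pair]

lemma Tfun_eq_sum {ρ η : ℝ} (hρ : ρ ≠ 0) (hη : η ≠ 0) (k : ℕ) :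
    Tfun k ρ η = ∑ i ∈ Icc 1 k, ((η + 1) * (η ^ 2)⁻¹ ^ i - (ρ + 1) * (ρ ^ 2)⁻¹ ^ i) := by
  rw [Tfun, Efun_eq_sum hη, Efun_eq_sum hρ, sum_sub_distrib]

lemma Ffun_succ (n : ℕ) (x : ℝ) : Ffun (n + 1) x = Ffun n x + x ^ (n + 1) :=
  sum_Icc_succ_top (by omega) _

lemma Ffun_nonneg {x : ℝ} (hx : 0 ≤ x) (n : ℕ) : 0 ≤ Ffun n x :=
  sum_nonneg fun j _ => pow_nonneg hx j

lemma Ffun_pos {x : ℝ} (hx : 0 < x) {n : ℕ} (hn : n ≠ 0) : 0 < Ffun n x :=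
  sum_pos (fun j _ => pow_pos hx j) ⟨1, by simp only [mem_Icc]; omega⟩

lemma Ffun_eq_sum_range (n : ℕ) (x : ℝ) : Ffun n x = ∑ i ∈ range n, x ^ (n - i) := by
  induction n with
  | zero => simp [Ffun]
  | succ n ih => rw [Ffun_succ, ih, sum_range_succ']; simp

lemma sum_Icc_one_add (p : ℕ → ℝ) (k n : ℕ) :
    ∑ i ∈ Icc 1 (k + n), p i = ∑ i ∈ Icc 1 k, p i + ∑ i ∈ range n, p (k + 1 + i) := by
  induction n with
  | zero => simp
  | succ n ih =>
    rw [← add_assoc, sum_Icc_succ_top (by omega), ih, sum_range_succ, add_assoc, add_right_comm k]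

theorem sum_mul_pow_add_mul_Ffun_nonneg {p : ℕ → ℝ} {η : ℝ} (hη : 0 < η)
    (hsign : ∀ i j, i ≤ j → 0 ≤ p j → 0 ≤ p i)
    (hgrowth : ∀ m i, p m ≤ 0 → η ^ i * p (m + i) ≤ p m)
    {k n : ℕ} (hsum : ∑ i ∈ Icc 1 (k + n), p i = 0) :
    0 ≤ (∑ i ∈ Icc 1 k, p i) * η ^ n + p (k + 1) * Ffun n η := by
  rcases le_or_gt 0 (p (k + 1)) with hp | hp
  · have hT : 0 ≤ ∑ i ∈ Icc 1 k, p i :=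
      sum_nonneg fun i hi => hsign i (k + 1) (by simp only [mem_Icc] at hi; omega) hp
    have := Ffun_nonneg hη.le n
    positivity
  · have hT : ∑ i ∈ Icc 1 k, p i = -∑ i ∈ range n, p (k + 1 + i) := by
      rw [sum_Icc_one_add] at hsum
      linarith
    calc 0 ≤ ∑ i ∈ range n, η ^ (n - i) * (p (k + 1) - η ^ i * p (k + 1 + i)) :=
          sum_nonneg fun i _ =>
            mul_nonneg (pow_nonneg hη.le _) (sub_nonneg.2 (hgrowth _ _ hp.le))
      _ = (∑ i ∈ Icc 1 k, p i) * η ^ n + p (k + 1) * Ffun n η := by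
          rw [hT, Ffun_eq_sum_range, neg_mul, sum_mul, mul_sum, neg_add_eq_sub,
            ← sum_sub_distrib]
          refine sum_congr rfl fun i hi => ?_
          rw [← Nat.sub_add_cancel (mem_range.1 hi).le, pow_add, Nat.add_sub_cancel]
          ring

section DifferenceOfPowers

variable {A B u v : ℝ}

lemma sub_mul_pow_nonneg_of_le (hA : 0 < A) (hu : 0 < u) (huv : u ≤ v) {i j : ℕ} (hij : i ≤ j)
    (h : 0 ≤ A * u ^ j - B * v ^ j) : 0 ≤ A * u ^ i - B * v ^ i := by
  obtain ⟨d, rfl⟩ := Nat.exists_eq_add_of_le hij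
  have hud : u ^ d ≤ v ^ d := pow_le_pow_left₀ hu.le huv d
  have hvd : 0 < v ^ d := pow_pos (hu.trans_le huv) d
  have hAu : 0 < A * u ^ i := by positivity
  rw [pow_add, pow_add] at h
  nlinarith

lemma pow_mul_sub_mul_pow_le {η : ℝ} (hA : 0 ≤ A) (hu : 0 ≤ u) (huv : u ≤ v) (hη : 0 ≤ η)
    (hηv : 1 ≤ η * v) {m : ℕ} (hm : A * u ^ m - B * v ^ m ≤ 0) (i : ℕ) :
    η ^ i * (A * u ^ (m + i) - B * v ^ (m + i)) ≤ A * u ^ m - B * v ^ m := by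
  have hv1 : 1 ≤ (η * v) ^ i := one_le_pow₀ hηv
  have huv' : (η * u) ^ i ≤ (η * v) ^ i :=
    pow_le_pow_left₀ (mul_nonneg hη hu) (mul_le_mul_of_nonneg_left huv hη) i
  have hAu : 0 ≤ A * u ^ m := mul_nonneg hA (pow_nonneg hu m)
  have expand : η ^ i * (A * u ^ (m + i) - B * v ^ (m + i))
      = A * u ^ m * (η * u) ^ i - B * v ^ m * (η * v) ^ i := by
    rw [pow_add, pow_add, mul_pow, mul_pow]; ring
  rw [expand]
  nlinarith [mul_nonneg (neg_nonneg.2 hm) (sub_nonneg.2 hv1), mul_nonneg hAu (sub_nonneg.2 huv')]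

end DifferenceOfPowers

theorem ratio_monotone_general
    (N : ℕ)
    (ρ η : ℝ) (hρ : ρ ∈ Set.Ioo (-1 : ℝ) 0) (hη : -ρ < η)
    (hopt : Efun N η = Efun N ρ) :
    ∀ k, 1 ≤ k → k ≤ N - 2 →
      0 ≤ Tfun (k + 1) ρ η / Ffun (N - k - 1) η - Tfun k ρ η / Ffun (N - k) η := by
  intro k hk1 hk2
  obtain ⟨hρ1, hρ0⟩ := hρ
  have hη0 : 0 < η := by linarith
  have hρ2 : 0 < ρ ^ 2 := by nlinarith
  have hv : (η ^ 2)⁻¹ ≤ (ρ ^ 2)⁻¹ := inv_anti₀ hρ2 (by nlinarith)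
  have hηv : 1 ≤ η * (ρ ^ 2)⁻¹ := by
    rw [← div_eq_mul_inv, one_le_div hρ2]; nlinarith
  set p : ℕ → ℝ := fun i => (η + 1) * (η ^ 2)⁻¹ ^ i - (ρ + 1) * (ρ ^ 2)⁻¹ ^ i
  have hT (m : ℕ) : Tfun m ρ η = ∑ i ∈ Icc 1 m, p i := Tfun_eq_sum hρ0.ne hη0.ne' m
  obtain ⟨n, hn, hNk⟩ : ∃ n, 1 ≤ n ∧ N = k + (n + 1) := ⟨N - k - 1, by omega, by omega⟩
  have key := sum_mul_pow_add_mul_Ffun_nonneg hη0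
    (fun i j hij => sub_mul_pow_nonneg_of_le (by linarith) (by positivity) hv hij)
    (fun m i hm => pow_mul_sub_mul_pow_le (by linarith) (by positivity) hv hη0.le hηv hm i)
    (show ∑ i ∈ Icc 1 (k + (n + 1)), p i = 0 by rw [← hT, ← hNk, Tfun, hopt, sub_self])
  have hF := Ffun_pos hη0 (n := n) (by omega)
  rw [show N - k - 1 = n by omega, show N - k = n + 1 by omega, hT, hT,
    sum_Icc_succ_top (by omega), div_sub_div _ _ hF.ne' (Ffun_pos hη0 n.succ_ne_zero).ne',
    Ffun_succ]
  rw [Ffun_succ] at key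
  exact div_nonneg (by linarith) (by positivity)

/-- **Proposition 3.** If `ρ ∈ (-1,0)`, `η > -ρ` and `T_N(ρ,η) = 0`, then
`T_{k+1}(ρ,η)/F_{N-k-1}(η) - T_k(ρ,η)/F_{N-k}(η) ≥ 0` for `1 ≤ k ≤ N-2`. -/
theorem ratio_monotone
    (N : ℕ) (hN : 3 ≤ N)
    (ρ η : ℝ) (hρ : ρ ∈ Set.Ioo (-1 : ℝ) 0) (hη : -ρ < η)
    (hopt : Efun N η = Efun N ρ) :
    ∀ k, 1 ≤ k → k ≤ N - 2 →
      0 ≤ Tfun (k + 1) ρ η / Ffun (N - k - 1) η - Tfun k ρ η / Ffun (N - k) η :=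
  ratio_monotone_general N ρ η hρ hη hopt
end

section
/- Let N ≥ 1 be an integer, L > 0, μ < L, and γ ∈ (0, 2/L) with γL ≠ 1 and γμ ≠ 1. If E_N(1 − γμ) > 0 and E_N(1 − γμ) < E_N(1 − γL), then there exists L' ∈ (L, 2/γ) with γL' ≠ 1 such that E_N(1 − γμ) = E_N(1 − γL'). -/
open Finset

/-! Substituting `y = x⁻¹` turns `E_N` into the polynomial `F_{2N}(y) = y + ⋯ + y^{2N}`, which
vanishes at `y = -1` and tends to `+∞` as `y → -∞`. So every value `t > 0` is attained at some
`y < -1`, i.e. at some `x ∈ (-1, 0)`, and `L' := (1 - x)/γ` lies in `(1/γ, 2/γ)`. When `γL > 1`,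
the intermediate value theorem applied between `y = -1` and `y = (1 - γL)⁻¹`, where `F_{2N}`
exceeds `t`, moreover gives `x < 1 - γL`, i.e. `L < L'`. -/

theorem Efun_eq_Ffun_inv (k : ℕ) (x : ℝ) : Efun k x = Ffun (2 * k) x⁻¹ := by
  unfold Efun Ffun
  refine Finset.sum_congr rfl fun j _ => ?_
  rw [zpow_neg, zpow_natCast, inv_pow]

theorem continuous_Ffun (k : ℕ) : Continuous (Ffun k) :=
  continuous_finsetSum _ fun j _ => continuous_pow j

theorem Ffun_two_mul_succ (k : ℕ) (y : ℝ) :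
    Ffun (2 * (k + 1)) y = Ffun (2 * k) y + y ^ (2 * k + 1) * (1 + y) := by
  unfold Ffun
  rw [show 2 * (k + 1) = 2 * k + 1 + 1 by ring, Finset.sum_Icc_succ_top (by omega),
    Finset.sum_Icc_succ_top (by omega)]
  ring

theorem Ffun_two_mul_neg_one (k : ℕ) : Ffun (2 * k) (-1) = 0 := by
  induction k with
  | zero => simp [Ffun]
  | succ k ih => rw [Ffun_two_mul_succ, ih]; ring

theorem neg_one_sub_le_pow_mul_one_add {y : ℝ} (hy : y ≤ -1) {n : ℕ} (hn : Odd n) :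
    -1 - y ≤ y ^ n * (1 + y) := by
  have hpow : 1 ≤ (-y) ^ n := one_le_pow₀ (by linarith)
  have hflip : y ^ n * (1 + y) = (-y) ^ n * (-1 - y) := by rw [hn.neg_pow]; ring
  rw [hflip]
  nlinarith

theorem Ffun_two_mul_nonneg (k : ℕ) {y : ℝ} (hy : y ≤ -1) : 0 ≤ Ffun (2 * k) y := by
  induction k with
  | zero => simp [Ffun]
  | succ k ih =>
    rw [Ffun_two_mul_succ]
    linarith [neg_one_sub_le_pow_mul_one_add hy (odd_two_mul_add_one k)]

theorem neg_one_sub_le_Ffun_two_mul {k : ℕ} (hk : k ≠ 0) {y : ℝ} (hy : y ≤ -1) :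
    -1 - y ≤ Ffun (2 * k) y := by
  obtain ⟨k, rfl⟩ := Nat.exists_eq_succ_of_ne_zero hk
  rw [Ffun_two_mul_succ]
  linarith [Ffun_two_mul_nonneg k hy, neg_one_sub_le_pow_mul_one_add hy (odd_two_mul_add_one k)]

theorem lt_Efun_neg_inv {k : ℕ} (hk : k ≠ 0) {t : ℝ} (ht : 0 ≤ t) :
    t < Efun k (-(t + 2)⁻¹) := by
  rw [Efun_eq_Ffun_inv, inv_neg, inv_inv]
  linarith [neg_one_sub_le_Ffun_two_mul hk (y := -(t + 2)) (by linarith)]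

theorem exists_Ffun_two_mul_eq {k : ℕ} {t y₀ : ℝ} (ht : 0 < t) (hy₀ : y₀ ≤ -1)
    (hlt : t < Ffun (2 * k) y₀) : ∃ y, y₀ < y ∧ y < -1 ∧ Ffun (2 * k) y = t := by
  have hmem : t ∈ Set.Icc (Ffun (2 * k) (-1)) (Ffun (2 * k) y₀) := by
    rw [Ffun_two_mul_neg_one]
    exact ⟨ht.le, hlt.le⟩
  obtain ⟨y, ⟨hy₀y, hy⟩, hyt⟩ :=
    intermediate_value_Icc' hy₀ (continuous_Ffun _).continuousOn hmem
  refine ⟨y, hy₀y.lt_of_ne ?_, hy.lt_of_ne ?_, hyt⟩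
  · rintro rfl
    linarith
  · rintro rfl
    rw [Ffun_two_mul_neg_one] at hyt
    linarith

theorem exists_Efun_eq_of_lt {k : ℕ} {t x₀ : ℝ} (ht : 0 < t) (hx₀ : -1 < x₀) (hx₀' : x₀ < 0)
    (hlt : t < Efun k x₀) : ∃ x, -1 < x ∧ x < x₀ ∧ Efun k x = t := by
  rw [Efun_eq_Ffun_inv] at hlt
  have hy₀ : x₀⁻¹ ≤ -1 := by
    rw [inv_le_of_neg hx₀' (by norm_num), inv_neg_one]
    exact hx₀.le
  obtain ⟨y, hy₀y, hy, hyt⟩ := exists_Ffun_two_mul_eq ht hy₀ hlt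
  have hyneg : y < 0 := by linarith
  refine ⟨y⁻¹, ?_, ?_, by rw [Efun_eq_Ffun_inv, inv_inv, hyt]⟩
  · rwa [lt_inv_of_neg (by norm_num) hyneg, inv_neg_one]
  · rwa [inv_lt_of_neg hyneg hx₀']

theorem exists_larger_L_general
    (N : ℕ) (hN : 1 ≤ N)
    (L μ γ : ℝ) (hL : 0 < L)
    (hγ0 : 0 < γ) (hγ2 : γ < 2 / L)
    (hpos : 0 < Efun N (1 - γ * μ))
    (hlt : Efun N (1 - γ * μ) < Efun N (1 - γ * L)) :
    ∃ L' : ℝ, L < L' ∧ L' < 2 / γ ∧ γ * L' ≠ 1 ∧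
      Efun N (1 - γ * μ) = Efun N (1 - γ * L') := by
  set t := Efun N (1 - γ * μ)
  have hγL2 : γ * L < 2 := (lt_div_iff₀ hL).mp hγ2
  obtain ⟨x₀, hx₀, hx₀', hx₀L, hx₀t⟩ :
      ∃ x₀, -1 < x₀ ∧ x₀ < 0 ∧ x₀ ≤ 1 - γ * L ∧ t < Efun N x₀ := by
    rcases le_or_gt (γ * L) 1 with hγL | hγL
    · have hinv : 0 < (t + 2)⁻¹ := by positivity
      have hinv' : (t + 2)⁻¹ < 1 := inv_lt_one_of_one_lt₀ (by linarith)
      exact ⟨-(t + 2)⁻¹, by linarith, by linarith, by linarith,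
        lt_Efun_neg_inv (by omega) hpos.le⟩
    · exact ⟨1 - γ * L, by linarith, by linarith, le_rfl, hlt⟩
  obtain ⟨x, hx, hxx₀, hxt⟩ := exists_Efun_eq_of_lt hpos hx₀ hx₀' hx₀t
  have hγL' : γ * ((1 - x) / γ) = 1 - x := by field_simp
  refine ⟨(1 - x) / γ, ?_, ?_, ?_, ?_⟩
  · rw [lt_div_iff₀ hγ0]
    linarith
  · rw [div_lt_div_iff_of_pos_right hγ0]
    linarith
  · rw [hγL']
    linarith
  · rw [hγL', sub_sub_cancel, hxt]

/-- If `γ < γ*(N, μ, L)` (i.e. `E_N(1-γμ) < E_N(1-γL)`), one can increase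
the smoothness constant to `L' ∈ (L, 2/γ)` so that `γ` becomes optimal for `(μ, L')`. -/
theorem exists_larger_L
    (N : ℕ) (hN : 1 ≤ N)
    (L μ γ : ℝ) (hL : 0 < L) (hμL : μ < L)
    (hγ0 : 0 < γ) (hγ2 : γ < 2 / L) (hγL : γ * L ≠ 1) (hγμ : γ * μ ≠ 1)
    (hpos : 0 < Efun N (1 - γ * μ))
    (hlt : Efun N (1 - γ * μ) < Efun N (1 - γ * L)) :
    ∃ L' : ℝ, L < L' ∧ L' < 2 / γ ∧ γ * L' ≠ 1 ∧
      Efun N (1 - γ * μ) = Efun N (1 - γ * L') :=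
  exists_larger_L_general N hN L μ γ hL hγ0 hγ2 hpos hlt
end
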